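/- Let H be a complex Hilbert space and A a bounded self-adjoint operator on H whose spectrum is contained in [λ₀, ∞) for some λ₀ > 0. Fix T > 0, e ∈ H, γ ∈ [0, 2), and α ∈ [0, 1], and define Γ(r) = (r/T) e^{-(T−r)A} e for r ∈ [0,T]. Then ∫₀^T ‖A^{1/2} Γ(r)‖² · ‖A^{α/2} Γ(r)‖^{2/(2−γ)} dr ≤ (√(2−γ)/4) · ‖A^{1/4} e‖² · ‖A^{(2α+γ−2)/4} e‖^{2/(2−γ)}. -/

import Mathlib

/-!
`φ(f) = re ⟪e, f(A) e⟫` is a positive linear functional on continuous functions on the spectrum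
of `A`, and `‖A^a e^{-tA} e‖² = φ(x^{2a} e^{-2tx})`. Drop the factor `r/T ≤ 1` and put
`s = T - r`. Hölder's inequality for `φ` gives
`φ(x^{m+θ} e^{-2sx}) ≤ φ(x^m)^{1-θ} φ(x^{m+1} e^{-2sx/θ})^θ`; with `θ = m = 1/2` for the first
norm and `θ = (2-γ)/2`, `m = α - θ` for the second, the integrand is at most a constant times
`X(s)^{1/2} Y(s)^{1/2}`, where `X`, `Y` are of the form `φ(x^q e^{-csx})`. Cauchy–Schwarz in `s`
together with `∫₀^T φ(x^q e^{-csx}) ds ≤ φ(x^{q-1}) / c` (as `∫₀^∞ e^{-csx} ds = 1/(cx)`)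
finishes the proof. Both Hölder inequalities come from the weighted AM–GM inequality by
optimizing over rescalings.
-/

open MeasureTheory

/-- Fractional power `A^s` of a (positive self-adjoint) bounded operator, via the
continuous functional calculus. -/
noncomputable def fracPow {H : Type*} [NormedAddCommGroup H] [InnerProductSpace ℂ H]
    [CompleteSpace H] (A : H →L[ℂ] H) (s : ℝ) : H →L[ℂ] H :=
  cfc (fun x : ℝ => x ^ s) A

open Set

theorem rpow_mul_rpow_mul_le {u v a b θ : ℝ} (hu : 0 ≤ u) (hv : 0 ≤ v) (ha : 0 ≤ a) (hb : 0 ≤ b)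
    (hθ0 : 0 ≤ θ) (hθ1 : θ ≤ 1) :
    u ^ (1 - θ) * v ^ θ * (a ^ (1 - θ) * b ^ θ) ≤ (1 - θ) * u * a + θ * v * b := by
  have := Real.geom_mean_le_arith_mean2_weighted (sub_nonneg.mpr hθ1) hθ0
    (mul_nonneg hu ha) (mul_nonneg hv hb) (by ring)
  rw [Real.mul_rpow hu ha, Real.mul_rpow hv hb] at this
  linarith

theorem le_rpow_mul_rpow_of_forall_le {P F G θ : ℝ} (hθ0 : 0 < θ) (hθ1 : θ ≤ 1)
    (hF : 0 ≤ F) (hG : 0 ≤ G)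
    (h : ∀ u v : ℝ, 0 < u → 0 < v → P * (u ^ (1 - θ) * v ^ θ) ≤ (1 - θ) * u * F + θ * v * G) :
    P ≤ F ^ (1 - θ) * G ^ θ := by
  have hcont : Continuous fun ε : ℝ => (F + ε) ^ (1 - θ) * (G + ε) ^ θ := by
    have h1 := Real.continuous_rpow_const (sub_nonneg.mpr hθ1)
    have h2 := Real.continuous_rpow_const hθ0.le
    fun_prop
  -- Test against `u = (F + ε)⁻¹`, `v = (G + ε)⁻¹` and let `ε → 0`: `F` or `G` may vanish.
  refine ge_of_tendsto (by simpa using hcont.continuousWithinAt.tendsto (s := Ioi 0) (x := 0)) ?_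
  filter_upwards [self_mem_nhdsWithin] with ε (hε : 0 < ε)
  have hFε : 0 < F + ε := by positivity
  have hGε : 0 < G + ε := by positivity
  have hu := h (F + ε)⁻¹ (G + ε)⁻¹ (inv_pos.mpr hFε) (inv_pos.mpr hGε)
  rw [Real.inv_rpow hFε.le, Real.inv_rpow hGε.le] at hu
  have hF1 : (F + ε)⁻¹ * F ≤ 1 := by rw [inv_mul_le_iff₀ hFε]; linarith
  have hG1 : (G + ε)⁻¹ * G ≤ 1 := by rw [inv_mul_le_iff₀ hGε]; linarith
  have hsum : P * ((F + ε) ^ (1 - θ) * (G + ε) ^ θ)⁻¹ ≤ 1 := by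
    rw [mul_inv]
    nlinarith [mul_le_mul_of_nonneg_left hF1 (sub_nonneg.mpr hθ1),
      mul_le_mul_of_nonneg_left hG1 hθ0.le]
  have hpos : 0 < (F + ε) ^ (1 - θ) * (G + ε) ^ θ := by positivity
  rwa [← div_eq_mul_inv, div_le_one hpos] at hsum

theorem integral_rpow_mul_rpow_le {α : Type*} [MeasurableSpace α] {μ : Measure α}
    {f g : α → ℝ} (hf0 : 0 ≤ f) (hg0 : 0 ≤ g) (hf : Integrable f μ) (hg : Integrable g μ)
    {θ : ℝ} (hθ0 : 0 < θ) (hθ1 : θ ≤ 1) :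
    ∫ a, f a ^ (1 - θ) * g a ^ θ ∂μ ≤ (∫ a, f a ∂μ) ^ (1 - θ) * (∫ a, g a ∂μ) ^ θ := by
  by_cases hfg : Integrable (fun a => f a ^ (1 - θ) * g a ^ θ) μ
  swap
  · rw [integral_undef hfg]
    exact mul_nonneg (Real.rpow_nonneg (integral_nonneg hf0) _)
      (Real.rpow_nonneg (integral_nonneg hg0) _)
  refine le_rpow_mul_rpow_of_forall_le hθ0 hθ1 (integral_nonneg hf0) (integral_nonneg hg0)
    fun u v hu hv => ?_
  calc (∫ a, f a ^ (1 - θ) * g a ^ θ ∂μ) * (u ^ (1 - θ) * v ^ θ)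
      = ∫ a, (u ^ (1 - θ) * v ^ θ) * (f a ^ (1 - θ) * g a ^ θ) ∂μ := by
        rw [integral_const_mul, mul_comm]
    _ ≤ ∫ a, ((1 - θ) * u * f a + θ * v * g a) ∂μ :=
        integral_mono (hfg.const_mul _) ((hf.const_mul _).add (hg.const_mul _)) fun a =>
          rpow_mul_rpow_mul_le hu.le hv.le (hf0 a) (hg0 a) hθ0.le hθ1
    _ = (1 - θ) * u * ∫ a, f a ∂μ + θ * v * ∫ a, g a ∂μ := by
        rw [integral_add (hf.const_mul _) (hg.const_mul _), integral_const_mul,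
          integral_const_mul]

theorem integral_rpow_mul_exp_neg_mul {x : ℝ} (hx : x ≠ 0) (q : ℝ) {c : ℝ} (hc : c ≠ 0) (T : ℝ) :
    ∫ s in (0:ℝ)..T, x ^ q * Real.exp (-(c * s * x)) =
      c⁻¹ * (x ^ (q - 1) * (1 - Real.exp (-(c * T * x)))) := by
  have hcx : -(c * x) ≠ 0 := neg_ne_zero.mpr (mul_ne_zero hc hx)
  have h := intervalIntegral.integral_comp_mul_left Real.exp (a := 0) (b := T) hcx
  simp only [mul_zero, integral_exp, Real.exp_zero, smul_eq_mul] at h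
  rw [intervalIntegral.integral_const_mul]
  simp_rw [show ∀ s, -(c * s * x) = -(c * x) * s from fun s => by ring, h,
    Real.rpow_sub_one hx]
  field_simp
  ring

theorem rpow_half_mul_rpow_mul_eq {N K θ : ℝ} (hN : 0 ≤ N) (hK : 0 ≤ K) (hθ : 0 < θ) :
    N ^ (1 / 2 : ℝ) * K ^ ((1 - θ) / (2 * θ)) *
        ((N / 4) ^ (1 / 2 : ℝ) * (K / (2 / θ)) ^ (1 / 2 : ℝ)) =
      √(2 * θ) / 4 * N * K ^ (1 / (2 * θ)) := by
  have hsplit : 1 / (2 * θ) = (1 - θ) / (2 * θ) + 1 / 2 := by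
    field_simp
    ring
  have hKexp : K ^ (1 / (2 * θ)) = K ^ ((1 - θ) / (2 * θ)) * √K := by
    rw [Real.sqrt_eq_rpow, hsplit, Real.rpow_add' hK (by rw [← hsplit]; positivity)]
  have hN4 : √(N / 4) = √N / 2 := by
    rw [Real.sqrt_div' _ (by norm_num), show (4 : ℝ) = 2 ^ 2 by norm_num, Real.sqrt_sq zero_le_two]
  have hKθ : √(K / (2 / θ)) = √(2 * θ) * √K / 2 := by
    rw [show K / (2 / θ) = (2 * θ) * K / 2 ^ 2 by field_simp, Real.sqrt_div' _ (by norm_num),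
      Real.sqrt_sq zero_le_two, Real.sqrt_mul (by positivity)]
  simp only [← Real.sqrt_eq_rpow]
  rw [hKexp, hN4, hKθ]
  ring_nf
  rw [Real.sq_sqrt hN]
  ring

theorem continuousOn_rpow_spectrum {R : Type*} [Ring R] [Algebra ℝ R] {A : R}
    (hσ : ∀ x ∈ spectrum ℝ A, 0 < x) (a : ℝ) :
    ContinuousOn (fun x : ℝ => x ^ a) (spectrum ℝ A) :=
  continuousOn_id.rpow_const fun x hx => Or.inl (hσ x hx).ne'

theorem continuousOn_rpow_mul_exp_spectrum {R : Type*} [Ring R] [Algebra ℝ R] {A : R}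
    (hσ : ∀ x ∈ spectrum ℝ A, 0 < x) (a b : ℝ) :
    ContinuousOn (fun x => x ^ a * Real.exp (b * x)) (spectrum ℝ A) :=
  (continuousOn_rpow_spectrum hσ a).mul (by fun_prop)

section

variable {H : Type*} [NormedAddCommGroup H] [InnerProductSpace ℂ H]

noncomputable def quadForm (e : H) : (H →L[ℂ] H) →L[ℝ] ℝ :=
  Complex.reCLM.comp (((innerSL ℂ e).comp (ContinuousLinearMap.apply ℂ H e)).restrictScalars ℝ)

@[simp]
theorem quadForm_apply (e : H) (T : H →L[ℂ] H) : quadForm e T = (inner ℂ e (T e)).re := rfl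

theorem quadForm_nonneg (e : H) {T : H →L[ℂ] H} (hT : 0 ≤ T) : 0 ≤ quadForm e T :=
  ((ContinuousLinearMap.nonneg_iff_isPositive T).mp hT).re_inner_nonneg_right e

variable [CompleteSpace H]

theorem quadForm_mono (e : H) : Monotone (quadForm e) := fun T S hTS => by
  have := quadForm_nonneg e (sub_nonneg.mpr hTS)
  rwa [map_sub, sub_nonneg] at this

theorem quadForm_cfc_nonneg {A : H →L[ℂ] H} (e : H) {f : ℝ → ℝ}
    (hf : ∀ x ∈ spectrum ℝ A, 0 ≤ f x) : 0 ≤ quadForm e (cfc f A) :=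
  quadForm_nonneg e (cfc_nonneg hf)

theorem norm_cfc_apply_sq {A : H →L[ℂ] H} (hA : IsSelfAdjoint A) (e : H) {f : ℝ → ℝ}
    (hf : ContinuousOn f (spectrum ℝ A)) :
    ‖cfc f A e‖ ^ 2 = quadForm e (cfc (fun x => f x ^ 2) A) := by
  have hsa : IsSelfAdjoint (cfc f A) := cfc_predicate f A
  rw [cfc_pow f 2 A, quadForm_apply, sq (cfc f A)]
  change _ = (inner ℂ e (cfc f A (cfc f A e))).re
  rw [← ContinuousLinearMap.adjoint_inner_left, hsa.adjoint_eq, inner_self_eq_norm_sq_to_K]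
  norm_cast

theorem quadForm_cfc_rpow_mul_rpow_le {A : H →L[ℂ] H} (e : H)
    {f g : ℝ → ℝ} (hf : ContinuousOn f (spectrum ℝ A)) (hg : ContinuousOn g (spectrum ℝ A))
    (hf0 : ∀ x ∈ spectrum ℝ A, 0 ≤ f x) (hg0 : ∀ x ∈ spectrum ℝ A, 0 ≤ g x)
    {θ : ℝ} (hθ0 : 0 < θ) (hθ1 : θ ≤ 1) :
    quadForm e (cfc (fun x => f x ^ (1 - θ) * g x ^ θ) A) ≤
      quadForm e (cfc f A) ^ (1 - θ) * quadForm e (cfc g A) ^ θ := by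
  have hfg : ContinuousOn (fun x => f x ^ (1 - θ) * g x ^ θ) (spectrum ℝ A) :=
    (hf.rpow_const fun _ _ => Or.inr (sub_nonneg.mpr hθ1)).mul
      (hg.rpow_const fun _ _ => Or.inr hθ0.le)
  refine le_rpow_mul_rpow_of_forall_le hθ0 hθ1 (quadForm_cfc_nonneg e hf0)
    (quadForm_cfc_nonneg e hg0) fun u v hu hv => ?_
  calc quadForm e (cfc (fun x => f x ^ (1 - θ) * g x ^ θ) A) * (u ^ (1 - θ) * v ^ θ)
      = quadForm e (cfc (fun x => u ^ (1 - θ) * v ^ θ * (f x ^ (1 - θ) * g x ^ θ)) A) := by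
        rw [cfc_const_mul _ _ A hfg, map_smul, smul_eq_mul, mul_comm]
    _ ≤ quadForm e (cfc (fun x => (1 - θ) * u * f x + θ * v * g x) A) :=
        quadForm_mono e <| cfc_mono (fun x hx => rpow_mul_rpow_mul_le hu.le hv.le (hf0 x hx)
          (hg0 x hx) hθ0.le hθ1) (continuousOn_const.mul hfg)
          ((continuousOn_const.mul hf).add (continuousOn_const.mul hg))
    _ = (1 - θ) * u * quadForm e (cfc f A) + θ * v * quadForm e (cfc g A) := by
        rw [cfc_add A (fun x => (1 - θ) * u * f x) (fun x => θ * v * g x)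
          (continuousOn_const.mul hf) (continuousOn_const.mul hg),
          cfc_const_mul _ _ A hf, cfc_const_mul _ _ A hg, map_add, map_smul, map_smul,
          smul_eq_mul, smul_eq_mul]

noncomputable def heatMoment (A : H →L[ℂ] H) (e : H) (q c s : ℝ) : ℝ :=
  quadForm e (cfc (fun x => x ^ q * Real.exp (-(c * s * x))) A)

variable {A : H →L[ℂ] H}

theorem fracPow_exp_smul_apply (hA : IsSelfAdjoint A) (hσ : ∀ x ∈ spectrum ℝ A, 0 < x)
    (a t : ℝ) (e : H) :
    fracPow A a (NormedSpace.exp ((-t) • A) e) =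
      cfc (fun x => x ^ a * Real.exp (-(t * x))) A e := by
  have hexp : NormedSpace.exp ((-t) • A) = cfc (fun x => Real.exp (-(t * x))) A := by
    rw [← CFC.real_exp_eq_normedSpace_exp ((IsSelfAdjoint.all (-t)).smul hA),
      ← cfc_comp_const_mul (-t) Real.exp A]
    simp only [neg_mul]
  rw [hexp, fracPow, cfc_mul (fun x => x ^ a) _ A (continuousOn_rpow_spectrum hσ _)]
  rfl

theorem norm_fracPow_exp_smul_apply_sq (hA : IsSelfAdjoint A) (hσ : ∀ x ∈ spectrum ℝ A, 0 < x)
    (a t : ℝ) (e : H) :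
    ‖fracPow A a (NormedSpace.exp ((-t) • A) e)‖ ^ 2 =
      quadForm e (cfc (fun x => x ^ (2 * a) * Real.exp (-(2 * t * x))) A) := by
  have hcont := continuousOn_rpow_mul_exp_spectrum hσ a (-t)
  simp only [neg_mul] at hcont
  rw [fracPow_exp_smul_apply hA hσ, norm_cfc_apply_sq hA e hcont]
  refine congrArg _ (cfc_congr fun x hx => ?_)
  rw [mul_pow, ← Real.rpow_mul_natCast (hσ x hx).le, ← Real.exp_nat_mul]
  ring_nf

theorem norm_fracPow_apply_sq (hA : IsSelfAdjoint A) (hσ : ∀ x ∈ spectrum ℝ A, 0 < x)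
    (a : ℝ) (e : H) : ‖fracPow A a e‖ ^ 2 = quadForm e (cfc (fun x : ℝ => x ^ (2 * a)) A) := by
  simpa using norm_fracPow_exp_smul_apply_sq hA hσ a 0 e

theorem heatMoment_nonneg (hσ : ∀ x ∈ spectrum ℝ A, 0 < x) (e : H) (q c s : ℝ) :
    0 ≤ heatMoment A e q c s :=
  quadForm_cfc_nonneg e fun x hx => mul_nonneg (Real.rpow_nonneg (hσ x hx).le q) (Real.exp_pos _).le

theorem antitone_heatMoment (hσ : ∀ x ∈ spectrum ℝ A, 0 < x) (e : H) (q : ℝ) {c : ℝ}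
    (hc : 0 ≤ c) : Antitone (heatMoment A e q c) :=
  fun s t hst => quadForm_mono e <| cfc_mono (fun x hx => by
      have hx := (hσ x hx).le
      gcongr)
    (by simpa only [neg_mul] using continuousOn_rpow_mul_exp_spectrum hσ q (-(c * t)))
    (by simpa only [neg_mul] using continuousOn_rpow_mul_exp_spectrum hσ q (-(c * s)))

theorem integral_heatMoment_le (hA : IsSelfAdjoint A) (hσ : ∀ x ∈ spectrum ℝ A, 0 < x)
    (e : H) (q : ℝ) {c : ℝ} (hc : 0 < c) {T : ℝ} (hT : 0 ≤ T) :
    ∫ s in (0:ℝ)..T, heatMoment A e q c s ≤ quadForm e (cfc (fun x : ℝ => x ^ (q - 1)) A) / c := by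
  set f : ℝ → ℝ → ℝ := fun s x => x ^ q * Real.exp (-(c * s * x))
  have hf : ContinuousOn (Function.uncurry f) (Ioc 0 T ×ˢ spectrum ℝ A) :=
    (continuousOn_snd.rpow_const fun p hp => Or.inl (hσ _ hp.2).ne').mul (by fun_prop)
  obtain ⟨M, hM⟩ := (spectrum.isCompact A).exists_bound_of_continuousOn
    (continuousOn_rpow_spectrum hσ q)
  have hbound : ∀ᵐ s ∂(volume.restrict (Ioc (0:ℝ) T)), ∀ x ∈ spectrum ℝ A, ‖f s x‖ ≤ M := by
    refine ae_restrict_of_forall_mem measurableSet_Ioc fun s hs x hx => ?_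
    have hexp : ‖Real.exp (-(c * s * x))‖ ≤ 1 := by
      rw [Real.norm_of_nonneg (Real.exp_pos _).le, Real.exp_le_one_iff, neg_nonpos]
      exact (mul_pos (mul_pos hc hs.1) (hσ x hx)).le
    exact (norm_mul_le _ _).trans ((mul_le_of_le_one_right (norm_nonneg _) hexp).trans (hM x hx))
  have hint : IntervalIntegrable (fun s => cfc (f s) A) volume 0 T :=
    (intervalIntegrable_iff_integrableOn_Ioc_of_le hT).mpr <|
      integrableOn_cfc measurableSet_Ioc f (fun _ => M) A hf hbound (hasFiniteIntegral_const M) hA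
  calc ∫ s in (0:ℝ)..T, quadForm e (cfc (f s) A)
      = quadForm e (cfc (fun x => ∫ s in (0:ℝ)..T, f s x) A) := by
        simp_rw [(quadForm e).intervalIntegral_comp_comm hint, intervalIntegral.integral_of_le hT,
          ← cfc_setIntegral measurableSet_Ioc f (fun _ => M) A hf hbound
            (hasFiniteIntegral_const M) hA]
    _ = quadForm e (cfc (fun x => c⁻¹ * (x ^ (q - 1) * (1 - Real.exp (-(c * T * x))))) A) :=
        congrArg _ (cfc_congr fun x hx => integral_rpow_mul_exp_neg_mul (hσ x hx).ne' q hc.ne' T)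
    _ ≤ quadForm e (cfc (fun x => c⁻¹ * x ^ (q - 1)) A) := by
        refine quadForm_mono e (cfc_mono (fun x hx => ?_)
          (continuousOn_const.mul ((continuousOn_rpow_spectrum hσ _).mul (by fun_prop)))
          (continuousOn_const.mul (continuousOn_rpow_spectrum hσ _)))
        have hx := (hσ x hx).le
        gcongr
        exact mul_le_of_le_one_right (Real.rpow_nonneg hx _) (sub_le_self _ (Real.exp_pos _).le)
    _ = quadForm e (cfc (fun x : ℝ => x ^ (q - 1)) A) / c := by
        rw [cfc_const_mul _ _ A (continuousOn_rpow_spectrum hσ _), map_smul, smul_eq_mul,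
          inv_mul_eq_div]

theorem integral_sqrt_heatMoment_mul_le (hA : IsSelfAdjoint A)
    (hσ : ∀ x ∈ spectrum ℝ A, 0 < x) (e : H) {q₁ q₂ c₁ c₂ : ℝ} (hc₁ : 0 < c₁) (hc₂ : 0 < c₂)
    {T : ℝ} (hT : 0 ≤ T) :
    ∫ s in (0:ℝ)..T, heatMoment A e q₁ c₁ s ^ (1 / 2 : ℝ) * heatMoment A e q₂ c₂ s ^ (1 / 2 : ℝ) ≤
      (quadForm e (cfc (fun x : ℝ => x ^ (q₁ - 1)) A) / c₁) ^ (1 / 2 : ℝ) *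
        (quadForm e (cfc (fun x : ℝ => x ^ (q₂ - 1)) A) / c₂) ^ (1 / 2 : ℝ) := by
  have hCS := integral_rpow_mul_rpow_le (μ := volume.restrict (Ioc 0 T))
    (heatMoment_nonneg hσ e q₁ c₁) (heatMoment_nonneg hσ e q₂ c₂)
    ((antitone_heatMoment hσ e q₁ hc₁.le).intervalIntegrable (a := 0) (b := T)).1
    ((antitone_heatMoment hσ e q₂ hc₂.le).intervalIntegrable (a := 0) (b := T)).1
    (θ := 1 / 2) (by norm_num) (by norm_num)
  rw [show (1 : ℝ) - 1 / 2 = 1 / 2 by norm_num] at hCS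
  simp only [← intervalIntegral.integral_of_le hT] at hCS
  have hI : ∀ q c : ℝ, 0 ≤ ∫ s in (0:ℝ)..T, heatMoment A e q c s :=
    fun q c => intervalIntegral.integral_nonneg hT fun s _ => heatMoment_nonneg hσ e q c s
  refine hCS.trans (mul_le_mul ?_ ?_ (Real.rpow_nonneg (hI _ _) _) (Real.rpow_nonneg
    (div_nonneg (quadForm_cfc_nonneg e fun x hx => Real.rpow_nonneg (hσ x hx).le _) hc₁.le) _))
  · exact Real.rpow_le_rpow (hI _ _) (integral_heatMoment_le hA hσ e q₁ hc₁ hT) (by norm_num)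
  · exact Real.rpow_le_rpow (hI _ _) (integral_heatMoment_le hA hσ e q₂ hc₂ hT) (by norm_num)

theorem norm_fracPow_exp_smul_apply_sq_le (hA : IsSelfAdjoint A)
    (hσ : ∀ x ∈ spectrum ℝ A, 0 < x) (e : H) {θ : ℝ} (hθ0 : 0 < θ) (hθ1 : θ ≤ 1) (m t : ℝ) :
    ‖fracPow A ((m + θ) / 2) (NormedSpace.exp ((-t) • A) e)‖ ^ 2 ≤
      quadForm e (cfc (fun x : ℝ => x ^ m) A) ^ (1 - θ) * heatMoment A e (m + 1) (2 / θ) t ^ θ := by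
  have hmul : ∀ x ∈ spectrum ℝ A,
      (x ^ m) ^ (1 - θ) * (x ^ (m + 1) * Real.exp (-(2 / θ * t * x))) ^ θ =
        x ^ (2 * ((m + θ) / 2)) * Real.exp (-(2 * t * x)) := fun x hx => by
    have hx0 := hσ x hx
    rw [Real.mul_rpow (Real.rpow_nonneg hx0.le _) (Real.exp_pos _).le, ← Real.rpow_mul hx0.le,
      ← Real.rpow_mul hx0.le, ← Real.exp_mul, ← mul_assoc, ← Real.rpow_add hx0]
    congr 2
    · ring
    · field_simp
  rw [norm_fracPow_exp_smul_apply_sq hA hσ, ← cfc_congr hmul]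
  exact quadForm_cfc_rpow_mul_rpow_le e (continuousOn_rpow_spectrum hσ _)
    (by simpa only [neg_mul] using continuousOn_rpow_mul_exp_spectrum hσ (m + 1) (-(2 / θ * t)))
    (fun x hx => Real.rpow_nonneg (hσ x hx).le _)
    (fun x hx => mul_nonneg (Real.rpow_nonneg (hσ x hx).le _) (Real.exp_pos _).le) hθ0 hθ1

theorem norm_fracPow_smul_exp_smul_apply_rpow_le (hA : IsSelfAdjoint A)
    (hσ : ∀ x ∈ spectrum ℝ A, 0 < x) (e : H) {θ : ℝ} (hθ0 : 0 < θ) (hθ1 : θ ≤ 1) (m t : ℝ)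
    {c : ℝ} (hc : |c| ≤ 1) :
    ‖fracPow A ((m + θ) / 2) (c • NormedSpace.exp ((-t) • A) e)‖ ^ (1 / θ) ≤
      quadForm e (cfc (fun x : ℝ => x ^ m) A) ^ ((1 - θ) / (2 * θ)) *
        heatMoment A e (m + 1) (2 / θ) t ^ (1 / 2 : ℝ) := by
  set y := ‖fracPow A ((m + θ) / 2) (NormedSpace.exp ((-t) • A) e)‖
  have hK := quadForm_cfc_nonneg e fun x hx => Real.rpow_nonneg (hσ x hx).le m
  have hY := heatMoment_nonneg hσ e (m + 1) (2 / θ) t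
  calc ‖fracPow A ((m + θ) / 2) (c • NormedSpace.exp ((-t) • A) e)‖ ^ (1 / θ)
      ≤ y ^ (1 / θ) := by
        rw [ContinuousLinearMap.map_smul_of_tower, norm_smul, Real.norm_eq_abs]
        gcongr
        exact mul_le_of_le_one_left (norm_nonneg _) hc
    _ = (y ^ 2) ^ (1 / (2 * θ)) := by
        rw [← Real.rpow_natCast, ← Real.rpow_mul (norm_nonneg _)]
        congr 1
        push_cast
        field_simp
    _ ≤ (quadForm e (cfc (fun x : ℝ => x ^ m) A) ^ (1 - θ) *
          heatMoment A e (m + 1) (2 / θ) t ^ θ) ^ (1 / (2 * θ)) := by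
        gcongr
        exact norm_fracPow_exp_smul_apply_sq_le hA hσ e hθ0 hθ1 m t
    _ = _ := by
        rw [Real.mul_rpow (Real.rpow_nonneg hK _) (Real.rpow_nonneg hY _), ← Real.rpow_mul hK,
          ← Real.rpow_mul hY]
        congr 2 <;> field_simp

theorem norm_fracPow_sq_mul_norm_fracPow_rpow_le (hA : IsSelfAdjoint A)
    (hσ : ∀ x ∈ spectrum ℝ A, 0 < x) (e : H) {θ : ℝ} (hθ0 : 0 < θ) (hθ1 : θ ≤ 1) (m t : ℝ)
    {c : ℝ} (hc : |c| ≤ 1) :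
    ‖fracPow A (1 / 2) (c • NormedSpace.exp ((-t) • A) e)‖ ^ 2 *
        ‖fracPow A ((m + θ) / 2) (c • NormedSpace.exp ((-t) • A) e)‖ ^ (1 / θ) ≤
      quadForm e (cfc (fun x : ℝ => x ^ (1 / 2 : ℝ)) A) ^ (1 / 2 : ℝ) *
        quadForm e (cfc (fun x : ℝ => x ^ m) A) ^ ((1 - θ) / (2 * θ)) *
        (heatMoment A e (3 / 2) 4 t ^ (1 / 2 : ℝ) *
          heatMoment A e (m + 1) (2 / θ) t ^ (1 / 2 : ℝ)) := by
  have h1 := norm_fracPow_smul_exp_smul_apply_rpow_le hA hσ e (θ := 1 / 2) (by norm_num)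
    (by norm_num) (1 / 2) t hc
  norm_num only [Real.rpow_two] at h1
  have h2 := norm_fracPow_smul_exp_smul_apply_rpow_le hA hσ e hθ0 hθ1 m t hc
  calc _ ≤ quadForm e (cfc (fun x : ℝ => x ^ (1 / 2 : ℝ)) A) ^ (1 / 2 : ℝ) *
          heatMoment A e (3 / 2) 4 t ^ (1 / 2 : ℝ) *
        (quadForm e (cfc (fun x : ℝ => x ^ m) A) ^ ((1 - θ) / (2 * θ)) *
          heatMoment A e (m + 1) (2 / θ) t ^ (1 / 2 : ℝ)) :=
        mul_le_mul h1 h2 (Real.rpow_nonneg (norm_nonneg _) _) (mul_nonneg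
          (Real.rpow_nonneg (quadForm_cfc_nonneg e fun x hx => Real.rpow_nonneg (hσ x hx).le _) _)
          (Real.rpow_nonneg (heatMoment_nonneg hσ e _ _ t) _))
    _ = _ := by ring

theorem integral_norm_fracPow_sq_mul_norm_fracPow_rpow_le (hA : IsSelfAdjoint A)
    (hσ : ∀ x ∈ spectrum ℝ A, 0 < x) (e : H) {θ : ℝ} (hθ0 : 0 < θ) (hθ1 : θ ≤ 1) (m : ℝ)
    {T : ℝ} (hT : 0 < T) :
    ∫ r in (0:ℝ)..T,
        ‖fracPow A (1 / 2) ((r / T) • NormedSpace.exp ((-(T - r)) • A) e)‖ ^ 2 *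
          ‖fracPow A ((m + θ) / 2) ((r / T) • NormedSpace.exp ((-(T - r)) • A) e)‖ ^ (1 / θ) ≤
      √(2 * θ) / 4 * ‖fracPow A (1 / 4) e‖ ^ 2 * ‖fracPow A (m / 2) e‖ ^ (1 / θ) := by
  set N := quadForm e (cfc (fun x : ℝ => x ^ (1 / 2 : ℝ)) A)
  set K := quadForm e (cfc (fun x : ℝ => x ^ m) A)
  set C := N ^ (1 / 2 : ℝ) * K ^ ((1 - θ) / (2 * θ))
  set B := fun s =>
    heatMoment A e (3 / 2) 4 s ^ (1 / 2 : ℝ) * heatMoment A e (m + 1) (2 / θ) s ^ (1 / 2 : ℝ)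
  have hN : 0 ≤ N := quadForm_cfc_nonneg e fun x hx => Real.rpow_nonneg (hσ x hx).le _
  have hK : 0 ≤ K := quadForm_cfc_nonneg e fun x hx => Real.rpow_nonneg (hσ x hx).le _
  have hsqrt : ∀ q c : ℝ, 0 ≤ c → Antitone fun s => heatMoment A e q c s ^ (1 / 2 : ℝ) :=
    fun q c hc s s' hss' => Real.rpow_le_rpow (heatMoment_nonneg hσ e q c s')
      (antitone_heatMoment hσ e q hc hss') (by norm_num)
  have hB : Antitone B := fun s s' hss' =>
    mul_le_mul (hsqrt _ _ (by norm_num) hss') (hsqrt _ _ (by positivity) hss')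
      (Real.rpow_nonneg (heatMoment_nonneg hσ e _ _ s') _)
      (Real.rpow_nonneg (heatMoment_nonneg hσ e _ _ s) _)
  have hBint : IntervalIntegrable (fun r => C * B (T - r)) volume 0 T :=
    ((hB.comp fun r r' h => sub_le_sub_left h T).intervalIntegrable).const_mul C
  calc _ ≤ ∫ r in (0:ℝ)..T, C * B (T - r) := by
        simp only [intervalIntegral.integral_of_le hT.le]
        refine integral_mono_of_nonneg (ae_of_all _ fun r => by positivity) hBint.1
          (ae_restrict_of_forall_mem measurableSet_Ioc fun r hr => ?_)
        refine norm_fracPow_sq_mul_norm_fracPow_rpow_le hA hσ e hθ0 hθ1 m (T - r) ?_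
        rw [abs_of_nonneg (div_nonneg hr.1.le hT.le)]
        exact div_le_one_of_le₀ hr.2 hT.le
    _ = C * ∫ s in (0:ℝ)..T, B s := by
        rw [intervalIntegral.integral_const_mul, intervalIntegral.integral_comp_sub_left B]
        simp
    _ ≤ C * ((N / 4) ^ (1 / 2 : ℝ) * (K / (2 / θ)) ^ (1 / 2 : ℝ)) := by
        gcongr
        have h := integral_sqrt_heatMoment_mul_le hA hσ e (q₁ := 3 / 2) (q₂ := m + 1)
          (by norm_num : (0:ℝ) < 4) (by positivity : 0 < 2 / θ) hT.le
        norm_num only [add_sub_cancel_right] at h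
        exact h
    _ = _ := by
        have hNe : ‖fracPow A (1 / 4) e‖ ^ 2 = N := by
          rw [norm_fracPow_apply_sq hA hσ, show (2 : ℝ) * (1 / 4) = 1 / 2 by norm_num]
        have hKe : ‖fracPow A (m / 2) e‖ ^ (1 / θ) = K ^ (1 / (2 * θ)) := by
          rw [show 1 / θ = (2 : ℝ) * (1 / (2 * θ)) by field_simp, Real.rpow_mul (norm_nonneg _),
            Real.rpow_two, norm_fracPow_apply_sq hA hσ, mul_div_cancel₀ m two_ne_zero]
        rw [rpow_half_mul_rpow_mul_eq hN hK hθ0, hNe, hKe]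

end

theorem stmt12_general
    {H : Type*} [NormedAddCommGroup H] [InnerProductSpace ℂ H] [CompleteSpace H]
    (A : H →L[ℂ] H) (hA : IsSelfAdjoint A)
    (lam : ℝ) (hlam : 0 < lam) (hspec : ∀ z ∈ spectrum ℂ A, lam ≤ z.re)
    (T : ℝ) (hT : 0 < T) (e : H)
    (γ α : ℝ) (hγ : γ ∈ Set.Ico (0:ℝ) 2)
    (Γ : ℝ → H)
    (hΓ : ∀ r, Γ r = (r / T) • (NormedSpace.exp ((-(T - r)) • A)) e) :
    (∫ r in (0:ℝ)..T,
        ‖fracPow A (1/2) (Γ r)‖ ^ 2 * ‖fracPow A (α / 2) (Γ r)‖ ^ ((2:ℝ) / (2 - γ))) ≤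
      Real.sqrt (2 - γ) / 4 * ‖fracPow A (1/4) e‖ ^ 2 *
        ‖fracPow A ((2 * α + γ - 2) / 4) e‖ ^ ((2:ℝ) / (2 - γ)) := by
  have hσ : ∀ x ∈ spectrum ℝ A, 0 < x := fun x hx =>
    hlam.trans_le (by simpa using hspec _ (spectrum.algebraMap_mem ℂ hx))
  have h := integral_norm_fracPow_sq_mul_norm_fracPow_rpow_le hA hσ e (θ := (2 - γ) / 2)
    (by linarith [hγ.2]) (by linarith [hγ.1]) (α - (2 - γ) / 2) hT
  rw [sub_add_cancel, one_div_div, show 2 * ((2 - γ) / 2) = 2 - γ by ring,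
    show (α - (2 - γ) / 2) / 2 = (2 * α + γ - 2) / 4 by ring] at h
  simpa only [hΓ] using h

/-- For `A` self-adjoint with spectrum in `[λ₀, ∞)`, `λ₀ > 0`,
`Γ(r) = (r/T) e^{-(T-r)A} e`, `γ ∈ [0,2)`, `α ∈ [0,1]`:
`∫₀^T ‖A^{1/2}Γ(r)‖² ‖A^{α/2}Γ(r)‖^{2/(2-γ)} dr
  ≤ (√(2-γ)/4) ‖A^{1/4}e‖² ‖A^{(2α+γ-2)/4} e‖^{2/(2-γ)}`. -/
theorem stmt12
    {H : Type*} [NormedAddCommGroup H] [InnerProductSpace ℂ H] [CompleteSpace H]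
    (A : H →L[ℂ] H) (hA : IsSelfAdjoint A)
    (lam : ℝ) (hlam : 0 < lam) (hspec : ∀ z ∈ spectrum ℂ A, lam ≤ z.re)
    (T : ℝ) (hT : 0 < T) (e : H)
    (γ α : ℝ) (hγ : γ ∈ Set.Ico (0:ℝ) 2) (hα : α ∈ Set.Icc (0:ℝ) 1)
    (Γ : ℝ → H)
    (hΓ : ∀ r, Γ r = (r / T) • (NormedSpace.exp ((-(T - r)) • A)) e) :
    (∫ r in (0:ℝ)..T,
        ‖fracPow A (1/2) (Γ r)‖ ^ 2 * ‖fracPow A (α / 2) (Γ r)‖ ^ ((2:ℝ) / (2 - γ))) ≤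
      Real.sqrt (2 - γ) / 4 * ‖fracPow A (1/4) e‖ ^ 2 *
        ‖fracPow A ((2 * α + γ - 2) / 4) e‖ ^ ((2:ℝ) / (2 - γ)) :=
  stmt12_general A hA lam hlam hspec T hT e γ α hγ Γ hΓ
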